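/- arXiv:2506.01972 — 8 statements merged into one kernel-verified Lean document; each statement's English description precedes it below -/
import Mathlib

section
/- Let α ∈ (0,1), Θ, θ⁰, μ ∈ ℝ and σ > 0. The worst-case conditional value-at-risk of the affine loss x ↦ Θx + θ⁰ over the mean–variance ambiguity set equals the optimal value of the second-order cone program: sSup { ⨅_{β ∈ ℝ} (β + (1-α)⁻¹ · ∫ max(Θx + θ⁰ - β, 0) dP(x)) : P is a Borel probability measure on ℝ with finite second moment, mean μ and variance σ² } = sInf { β + (1-α)⁻¹·(e + s) : (β, e, q, z, s) ∈ ℝ⁵, e ≥ 0, z > 0, e - θ⁰ + β + q - Θμ - z > 0, Real.sqrt (q² + Θ²σ² + (z - s)²) ≤ z + s }. -/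
/-!
Both values equal `Θμ + θ0 + κ|Θσ|` with `κ = √(α / (1 - α))`.

For any law with finite variance, `max y 0 = (y + |y|) / 2` and `E|Y - β| ≤ √(E (Y - β)²)` bound
the Rockafellar–Uryasev objective at a suitable `β` by `E Y + κ sd(Y)`. The bound is attained by the
two-point law with mass `1 - α` at `μ ± σκ` and `α` at `μ ∓ σ/κ`: its objective is at least the loss
at the heavy atom for every `β`.

The cone constraint of the program reads `q² + Θ²σ² ≤ 4zs`, so Cauchy–Schwarz and AM–GM give
`q + κ|Θσ| ≤ z + (1 + κ²) s`, a lower bound on the objective since `(1 - α)⁻¹ = 1 + κ²`; points on the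
cone boundary approach it.
-/

open MeasureTheory ProbabilityTheory Set

section CVaR

variable {Ω : Type*} [MeasurableSpace Ω]

noncomputable def cvarObjective (α : ℝ) (P : Measure Ω) (Y : Ω → ℝ) (β : ℝ) : ℝ :=
  β + (1 - α)⁻¹ * ∫ ω, max (Y ω - β) 0 ∂P

noncomputable def cvar (α : ℝ) (P : Measure Ω) (Y : Ω → ℝ) : ℝ :=
  ⨅ β : ℝ, cvarObjective α P Y β

variable {P : Measure Ω} [IsProbabilityMeasure P]

lemma integral_max_zero_le {Z : Ω → ℝ} (hZ : MemLp Z 2 P) :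
    ∫ ω, max (Z ω) 0 ∂P ≤ (P[Z] + √(P[Z] ^ 2 + Var[Z; P])) / 2 := by
  have hint : Integrable Z P := hZ.integrable one_le_two
  have hmax : ∀ z : ℝ, max z 0 = (z + |z|) / 2 := fun z => by
    rcases le_total z 0 with h | h
    · rw [max_eq_right h, abs_of_nonpos h]; ring
    · rw [max_eq_left h, abs_of_nonneg h]; ring
  -- Jensen for the square, in the form `Var |Z| ≥ 0`.
  have hjensen : (∫ ω, |Z ω| ∂P) ^ 2 ≤ P[Z] ^ 2 + Var[Z; P] := by
    have h := variance_nonneg |Z| P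
    rw [variance_eq_sub hZ.abs] at h
    rw [variance_eq_sub hZ]
    simp only [Pi.pow_apply, Pi.abs_apply, sq_abs] at h ⊢
    linarith
  calc ∫ ω, max (Z ω) 0 ∂P = (P[Z] + ∫ ω, |Z ω| ∂P) / 2 := by
        simp only [hmax]
        rw [integral_div, integral_add hint hint.abs]
    _ ≤ _ := by gcongr; exact Real.le_sqrt_of_sq_le hjensen

lemma integral_le_cvarObjective {α : ℝ} (hα : α ∈ Ico 0 1) {Y : Ω → ℝ} (hY : Integrable Y P)
    (β : ℝ) : P[Y] ≤ cvarObjective α P Y β := by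
  have hc : 1 ≤ (1 - α)⁻¹ := one_le_inv₀ (by linarith [hα.2]) |>.2 (by linarith [hα.1])
  have hpos : 0 ≤ ∫ ω, max (Y ω - β) 0 ∂P := integral_nonneg fun _ => le_max_right _ _
  have hlin : P[Y] - β ≤ ∫ ω, max (Y ω - β) 0 ∂P := by
    calc P[Y] - β = ∫ ω, (Y ω - β) ∂P := by
          rw [integral_sub hY (integrable_const β), integral_const, probReal_univ, one_smul]
      _ ≤ _ := integral_mono (hY.sub (integrable_const β)) ((hY.sub (integrable_const β)).pos_part)
            fun _ => le_max_left _ _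
  unfold cvarObjective
  nlinarith

lemma bddBelow_range_cvarObjective {α : ℝ} (hα : α ∈ Ico 0 1) {Y : Ω → ℝ}
    (hY : Integrable Y P) : BddBelow (range (cvarObjective α P Y)) :=
  ⟨P[Y], by rintro _ ⟨β, rfl⟩; exact integral_le_cvarObjective hα hY β⟩

lemma inv_one_sub_eq_one_add_sqrt_sq {α : ℝ} (hα : α ∈ Ico 0 1) :
    (1 - α)⁻¹ = 1 + √(α / (1 - α)) ^ 2 := by
  have h1α : 0 < 1 - α := sub_pos.2 hα.2
  rw [Real.sq_sqrt (div_nonneg hα.1 h1α.le)]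
  field_simp
  ring

lemma cvar_le_integral_add_sqrt_variance {α : ℝ} (hα : α ∈ Ioo 0 1) {Y : Ω → ℝ}
    (hY : MemLp Y 2 P) : cvar α P Y ≤ P[Y] + √(α / (1 - α)) * √Var[Y; P] := by
  set κ := √(α / (1 - α))
  set τ := √Var[Y; P]
  have hκ : 0 < κ := Real.sqrt_pos.2 (div_pos hα.1 (sub_pos.2 hα.2))
  have hτ : 0 ≤ τ := Real.sqrt_nonneg _
  have hc : (1 - α)⁻¹ = 1 + κ ^ 2 := inv_one_sub_eq_one_add_sqrt_sq (Ioo_subset_Ico_self hα)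
  have hint : Integrable Y P := hY.integrable one_le_two
  -- `β = P[Y] - d` minimises the upper bound of `integral_max_zero_le` for `Z = Y - β`.
  set d := τ * (1 - κ ^ 2) / (2 * κ) with hd
  have hsqrt : √(d ^ 2 + τ ^ 2) = τ * (1 + κ ^ 2) / (2 * κ) := by
    rw [Real.sqrt_eq_iff_eq_sq (by positivity) (by positivity), hd]
    field_simp
    ring
  have hbound : ∫ ω, max (Y ω - (P[Y] - d)) 0 ∂P ≤ (d + √(d ^ 2 + τ ^ 2)) / 2 := by
    have h := integral_max_zero_le (Z := fun ω => Y ω - (P[Y] - d)) (hY.sub (memLp_const _))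
    rwa [integral_sub hint (integrable_const _), integral_const, probReal_univ, one_smul,
      variance_sub_const hY.aestronglyMeasurable,
      ← Real.sq_sqrt (variance_nonneg Y P), sub_sub_cancel] at h
  calc cvar α P Y ≤ cvarObjective α P Y (P[Y] - d) :=
        ciInf_le (bddBelow_range_cvarObjective (Ioo_subset_Ico_self hα) hint) _
    _ ≤ (P[Y] - d) + (1 + κ ^ 2) * ((d + √(d ^ 2 + τ ^ 2)) / 2) := by
        rw [cvarObjective, hc]
        gcongr
    _ = P[Y] + κ * τ := by
        rw [hsqrt, hd]
        field_simp
        ring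

end CVaR

section TwoPoint

noncomputable def twoPoint (p a b : ℝ) : Measure ℝ :=
  ENNReal.ofReal (1 - p) • Measure.dirac a + ENNReal.ofReal p • Measure.dirac b

variable {p a b : ℝ}

lemma integrable_twoPoint (f : ℝ → ℝ) : Integrable f (twoPoint p a b) :=
  ((integrable_dirac enorm_lt_top).smul_measure ENNReal.ofReal_ne_top).add_measure
    ((integrable_dirac enorm_lt_top).smul_measure ENNReal.ofReal_ne_top)

lemma integral_twoPoint (hp : p ∈ Icc 0 1) (f : ℝ → ℝ) :
    ∫ x, f x ∂twoPoint p a b = (1 - p) * f a + p * f b := by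
  rw [twoPoint, integral_add_measure
      ((integrable_dirac enorm_lt_top).smul_measure ENNReal.ofReal_ne_top)
      ((integrable_dirac enorm_lt_top).smul_measure ENNReal.ofReal_ne_top),
    integral_smul_measure, integral_smul_measure, integral_dirac, integral_dirac,
    ENNReal.toReal_ofReal (sub_nonneg.2 hp.2), ENNReal.toReal_ofReal hp.1, smul_eq_mul, smul_eq_mul]

lemma isProbabilityMeasure_twoPoint (hp : p ∈ Icc 0 1) : IsProbabilityMeasure (twoPoint p a b) :=
  ⟨by simp [twoPoint, ← ENNReal.ofReal_add (sub_nonneg.2 hp.2) hp.1]⟩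

lemma memLp_id_twoPoint : MemLp id 2 (twoPoint p a b) :=
  (memLp_two_iff_integrable_sq aestronglyMeasurable_id).2 (integrable_twoPoint _)

lemma apply_le_cvar_twoPoint {α : ℝ} (hα : α ∈ Ico 0 1) (Y : ℝ → ℝ) :
    Y a ≤ cvar α (twoPoint α a b) Y := by
  have h1α : 0 < 1 - α := sub_pos.2 hα.2
  refine le_ciInf fun β => ?_
  rw [cvarObjective, integral_twoPoint (Ico_subset_Icc_self hα), mul_add, ← mul_assoc,
    inv_mul_cancel₀ h1α.ne', one_mul]
  have hb : 0 ≤ (1 - α)⁻¹ * (α * max (Y b - β) 0) := by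
    have := hα.1; positivity
  linarith [le_max_left (Y a - β) 0]

lemma integral_twoPoint_mean_variance (hp : p ∈ Icc 0 1) {κ : ℝ} (hκ0 : κ ≠ 0)
    (hκ : (1 - p) * κ ^ 2 = p) (μ s : ℝ) :
    ∫ x, x ∂twoPoint p (μ + s * κ) (μ - s / κ) = μ ∧
      ∫ x, (x - μ) ^ 2 ∂twoPoint p (μ + s * κ) (μ - s / κ) = s ^ 2 := by
  rw [integral_twoPoint hp, integral_twoPoint hp]
  constructor
  · field_simp
    linear_combination s * hκ
  · field_simp
    linear_combination (s ^ 2 * (κ ^ 2 - 1)) * hκ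

end TwoPoint

lemma cvar_affine_le {α : ℝ} (hα : α ∈ Ioo 0 1) {P : Measure ℝ} [IsProbabilityMeasure P]
    {μ σ : ℝ} (hP : MemLp id 2 P) (hmean : ∫ x, x ∂P = μ) (hvar : ∫ x, (x - μ) ^ 2 ∂P = σ ^ 2)
    (Θ θ0 : ℝ) :
    cvar α P (fun x => Θ * x + θ0) ≤ Θ * μ + θ0 + √(α / (1 - α)) * |Θ * σ| := by
  have hY : MemLp (fun x => Θ * x + θ0) 2 P := (hP.const_mul Θ).add (memLp_const θ0)
  have hint : Integrable (fun x : ℝ => x) P := hP.integrable one_le_two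
  have hm : P[fun x => Θ * x + θ0] = Θ * μ + θ0 := by
    rw [integral_add (hint.const_mul Θ) (integrable_const θ0), integral_const_mul, hmean,
      integral_const, probReal_univ, one_smul]
  have hv : Var[fun x => Θ * x + θ0; P] = (Θ * σ) ^ 2 := by
    rw [variance_add_const (by fun_prop), variance_const_mul,
      variance_eq_integral aemeasurable_id']
    simp only [hmean, hvar, mul_pow]
  calc cvar α P (fun x => Θ * x + θ0)
      ≤ P[fun x => Θ * x + θ0] + √(α / (1 - α)) * √Var[fun x => Θ * x + θ0; P] :=
        cvar_le_integral_add_sqrt_variance hα hY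
    _ = Θ * μ + θ0 + √(α / (1 - α)) * |Θ * σ| := by rw [hm, hv, Real.sqrt_sq_eq_abs]

theorem csSup_cvar_affine {α : ℝ} (hα : α ∈ Ioo 0 1) (Θ θ0 μ σ : ℝ) :
    sSup {v : ℝ | ∃ P : Measure ℝ, IsProbabilityMeasure P ∧ MemLp id 2 P ∧
        (∫ x, x ∂P) = μ ∧ (∫ x, (x - μ) ^ 2 ∂P) = σ ^ 2 ∧ v = cvar α P (fun x => Θ * x + θ0)} =
      Θ * μ + θ0 + √(α / (1 - α)) * |Θ * σ| := by
  set κ := √(α / (1 - α))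
  have h1α : 0 < 1 - α := sub_pos.2 hα.2
  have hκ : 0 < κ := Real.sqrt_pos.2 (div_pos hα.1 h1α)
  have hκ2 : (1 - α) * κ ^ 2 = α := by
    rw [Real.sq_sqrt (div_pos hα.1 h1α).le]
    field_simp
  obtain ⟨s, hs2, hΘs⟩ : ∃ s, s ^ 2 = σ ^ 2 ∧ Θ * s = |Θ * σ| := by
    rcases abs_choice (Θ * σ) with h | h
    · exact ⟨σ, rfl, h.symm⟩
    · exact ⟨-σ, neg_sq σ, by rw [h]; ring⟩
  obtain ⟨hmean, hvar⟩ := integral_twoPoint_mean_variance (Ioo_subset_Icc_self hα) hκ.ne' hκ2 μ s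
  have := isProbabilityMeasure_twoPoint (a := μ + s * κ) (b := μ - s / κ) (Ioo_subset_Icc_self hα)
  refine IsGreatest.csSup_eq ⟨⟨twoPoint α (μ + s * κ) (μ - s / κ), this, memLp_id_twoPoint,
    hmean, hvar.trans hs2, le_antisymm ?_ ?_⟩, ?_⟩
  · calc Θ * μ + θ0 + κ * |Θ * σ| = Θ * (μ + s * κ) + θ0 := by rw [← hΘs]; ring
      _ ≤ _ := apply_le_cvar_twoPoint (Ioo_subset_Ico_self hα) (fun x => Θ * x + θ0)
  · exact cvar_affine_le hα memLp_id_twoPoint hmean (hvar.trans hs2) Θ θ0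
  · rintro _ ⟨P, hP, hL2, hmean, hvar, rfl⟩
    exact cvar_affine_le hα hL2 hmean hvar Θ θ0

lemma sqrt_sq_add_add_sq_sub_le_add_iff {q t z s : ℝ} :
    √(q ^ 2 + t + (z - s) ^ 2) ≤ z + s ↔ 0 ≤ z + s ∧ q ^ 2 + t ≤ 4 * z * s := by
  rw [Real.sqrt_le_iff]
  refine and_congr_right fun _ => ?_
  constructor <;> intro h <;> nlinarith

lemma add_mul_le_of_sq_add_sq_le {κ τ q z s : ℝ} (hz : 0 < z) (h : q ^ 2 + τ ^ 2 ≤ 4 * z * s) :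
    q + κ * τ ≤ z + (1 + κ ^ 2) * s := by
  have hs : 0 ≤ s := by nlinarith [sq_nonneg q, sq_nonneg τ]
  have hcs : (q + κ * τ) ^ 2 ≤ (1 + κ ^ 2) * (q ^ 2 + τ ^ 2) := by
    nlinarith [sq_nonneg (κ * q - τ)]
  have hamgm : 4 * ((1 + κ ^ 2) * s) * z ≤ (z + (1 + κ ^ 2) * s) ^ 2 := by
    nlinarith [sq_nonneg (z - (1 + κ ^ 2) * s)]
  refine le_of_abs_le (abs_le_of_sq_le_sq ?_ (by positivity))
  nlinarith

theorem csInf_socp {α : ℝ} (hα : α ∈ Ioo 0 1) (Θ θ0 μ σ : ℝ) :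
    sInf {v : ℝ | ∃ β e q z s : ℝ, 0 ≤ e ∧ 0 < z ∧ 0 < e - θ0 + β + q - Θ * μ - z ∧
        √(q ^ 2 + Θ ^ 2 * σ ^ 2 + (z - s) ^ 2) ≤ z + s ∧ v = β + (1 - α)⁻¹ * (e + s)} =
      Θ * μ + θ0 + √(α / (1 - α)) * |Θ * σ| := by
  set κ := √(α / (1 - α))
  have hκ : 0 < κ := Real.sqrt_pos.2 (div_pos hα.1 (sub_pos.2 hα.2))
  have hc : (1 - α)⁻¹ = 1 + κ ^ 2 := inv_one_sub_eq_one_add_sqrt_sq (Ioo_subset_Ico_self hα)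
  have hτ : Θ ^ 2 * σ ^ 2 = |Θ * σ| ^ 2 := by rw [sq_abs, mul_pow]
  have hmem : ∀ δ > 0, ∃ β e q z s : ℝ, 0 ≤ e ∧ 0 < z ∧ 0 < e - θ0 + β + q - Θ * μ - z ∧
      √(q ^ 2 + Θ ^ 2 * σ ^ 2 + (z - s) ^ 2) ≤ z + s ∧
      Θ * μ + θ0 + κ * |Θ * σ| + δ = β + (1 - α)⁻¹ * (e + s) := by
    intro δ hδ
    -- `δ / 2` is spent on the strict constraint and `δ / 2` on replacing `|Θσ|` by `u > 0`,
    -- which keeps `z > 0` also when `Θσ = 0`.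
    set u := |Θ * σ| + δ / (2 * κ) with hu_def
    have hu : |Θ * σ| ≤ u := le_add_of_nonneg_right (by positivity)
    refine ⟨Θ * μ + θ0 + (1 + κ ^ 2) * (u / (2 * κ)) - u / κ + δ / 2, 0, u / κ,
      (1 + κ ^ 2) * (u / (2 * κ)), u / (2 * κ), le_rfl, by positivity, by linarith, ?_, ?_⟩
    · rw [sqrt_sq_add_add_sq_sub_le_add_iff, hτ]
      refine ⟨by positivity, ?_⟩
      field_simp
      nlinarith [pow_le_pow_left₀ (abs_nonneg _) hu 2]
    · rw [hc, hu_def]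
      field_simp
      ring
  refine csInf_eq_of_forall_ge_of_forall_gt_exists_lt ⟨_, hmem 1 one_pos⟩ ?_
    fun w hw => ⟨_, hmem ((w - (Θ * μ + θ0 + κ * |Θ * σ|)) / 2) (by linarith), by linarith⟩
  rintro _ ⟨β, e, q, z, s, he, hz, hcon, hcone, rfl⟩
  rw [sqrt_sq_add_add_sq_sub_le_add_iff, hτ] at hcone
  have hkey := add_mul_le_of_sq_add_sq_le (κ := κ) hz hcone.2
  rw [hc]
  nlinarith [mul_nonneg (sq_nonneg κ) he]

theorem worst_case_cvar_eq_socp_general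
    (α Θ θ0 μ σ : ℝ) (hα : α ∈ Set.Ioo (0 : ℝ) 1) :
    sSup { v : ℝ | ∃ P : Measure ℝ, IsProbabilityMeasure P ∧
        MemLp id 2 P ∧ (∫ x, x ∂P) = μ ∧ (∫ x, (x - μ) ^ 2 ∂P) = σ ^ 2 ∧
        v = ⨅ β : ℝ, (β + (1 - α)⁻¹ * ∫ x, max (Θ * x + θ0 - β) 0 ∂P) } =
    sInf { v : ℝ | ∃ β e q z s : ℝ, 0 ≤ e ∧ 0 < z ∧
        0 < e - θ0 + β + q - Θ * μ - z ∧
        Real.sqrt (q ^ 2 + Θ ^ 2 * σ ^ 2 + (z - s) ^ 2) ≤ z + s ∧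
        v = β + (1 - α)⁻¹ * (e + s) } :=
  (csSup_cvar_affine hα Θ θ0 μ σ).trans (csInf_socp hα Θ θ0 μ σ).symm

theorem worst_case_cvar_eq_socp
    (α Θ θ0 μ σ : ℝ) (hα : α ∈ Set.Ioo (0 : ℝ) 1) (hσ : 0 < σ) :
    sSup { v : ℝ | ∃ P : Measure ℝ, IsProbabilityMeasure P ∧
        MemLp id 2 P ∧ (∫ x, x ∂P) = μ ∧ (∫ x, (x - μ) ^ 2 ∂P) = σ ^ 2 ∧
        v = ⨅ β : ℝ, (β + (1 - α)⁻¹ * ∫ x, max (Θ * x + θ0 - β) 0 ∂P) } =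
    sInf { v : ℝ | ∃ β e q z s : ℝ, 0 ≤ e ∧ 0 < z ∧
        0 < e - θ0 + β + q - Θ * μ - z ∧
        Real.sqrt (q ^ 2 + Θ ^ 2 * σ ^ 2 + (z - s) ^ 2) ≤ z + s ∧
        v = β + (1 - α)⁻¹ * (e + s) } :=
  worst_case_cvar_eq_socp_general α Θ θ0 μ σ hα
end

section
/- Let α ∈ (0,1), Θ, θ⁰, μ ∈ ℝ and σ > 0. Then sInf { β + (1-α)⁻¹·(e + s) : (β, e, q, z, s) ∈ ℝ⁵, e ≥ 0, z > 0, e - θ⁰ + β + q - Θμ - z > 0, Real.sqrt (q² + Θ²σ² + (z - s)²) ≤ z + s } = Θμ + θ⁰ + |Θ|·σ·Real.sqrt (α/(1-α)). -/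
/-!
For `z > 0` the cone constraint says `q² + Θ²σ² ≤ 4zs`. Since `(1 - α)⁻¹ ≥ 1` one may take
`e = 0`, and `β` can be lowered to `θ0 + Θμ + z - q`, so the value is that of minimizing
`z - q + (1 - α)⁻¹ s` over the rotated cone, i.e. (with `s = (q² + c²)/(4z)`, `c = Θσ`) of
`z - q + (q² + c²) / (4z(1 - α))`. Completing the square first in `q` and then in `z` writes this as
`K + (q - 2z(1 - α))² / (4z(1 - α)) + (2αz - K)² / (4αz)` with `K = |c| √(α / (1 - α))`, so the
infimum is `Θμ + θ0 + K`; it is approached by `q = 2z(1 - α)`, `2αz = K + ε`, and never attained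
because the constraint on `β` is strict.
-/

theorem sqrt_add_sq_sub_le_add_iff {a z s : ℝ} (ha : 0 ≤ a) (hz : 0 < z) :
    √(a + (z - s) ^ 2) ≤ z + s ↔ a ≤ 4 * z * s := by
  rw [Real.sqrt_le_iff, show (z + s) ^ 2 = 4 * z * s + (z - s) ^ 2 by ring, add_le_add_iff_right]
  refine ⟨And.right, fun h => ⟨?_, h⟩⟩
  have : 0 ≤ s := nonneg_of_mul_nonneg_right (by linarith) (by positivity : (0:ℝ) < 4 * z)
  linarith

theorem sub_add_inv_one_sub_mul_eq {α c K q z : ℝ} (hα0 : 0 < α) (hα1 : α < 1) (hz : 0 < z)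
    (hK : K ^ 2 * (1 - α) = c ^ 2 * α) :
    z - q + (1 - α)⁻¹ * ((q ^ 2 + c ^ 2) / (4 * z)) =
      K + (q - 2 * z * (1 - α)) ^ 2 / (4 * z * (1 - α)) + (2 * α * z - K) ^ 2 / (4 * α * z) := by
  have : 1 - α ≠ 0 := by linarith
  field_simp
  linear_combination -hK

theorem sq_abs_mul_sqrt_div_one_sub {α c : ℝ} (hα0 : 0 < α) (hα1 : α < 1) :
    (|c| * √(α / (1 - α))) ^ 2 * (1 - α) = c ^ 2 * α := by
  have : 1 - α ≠ 0 := by linarith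
  rw [mul_pow, sq_abs, Real.sq_sqrt (div_nonneg hα0.le (by linarith))]
  field_simp

theorem abs_mul_sqrt_div_one_sub_le {α c q z s : ℝ} (hα0 : 0 < α) (hα1 : α < 1) (hz : 0 < z)
    (h : q ^ 2 + c ^ 2 ≤ 4 * z * s) :
    |c| * √(α / (1 - α)) ≤ z - q + (1 - α)⁻¹ * s := by
  have hs : (q ^ 2 + c ^ 2) / (4 * z) ≤ s := by
    rw [div_le_iff₀ (by positivity)]; linarith
  calc |c| * √(α / (1 - α))
      ≤ |c| * √(α / (1 - α)) + (q - 2 * z * (1 - α)) ^ 2 / (4 * z * (1 - α)) +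
          (2 * α * z - |c| * √(α / (1 - α))) ^ 2 / (4 * α * z) := by
        have h1α : 0 < 1 - α := sub_pos.2 hα1
        rw [add_assoc, le_add_iff_nonneg_right]
        exact add_nonneg (div_nonneg (sq_nonneg _) (mul_pos (by positivity) h1α).le) (by positivity)
    _ = z - q + (1 - α)⁻¹ * ((q ^ 2 + c ^ 2) / (4 * z)) :=
        (sub_add_inv_one_sub_mul_eq hα0 hα1 hz (sq_abs_mul_sqrt_div_one_sub hα0 hα1)).symm
    _ ≤ z - q + (1 - α)⁻¹ * s := by gcongr

theorem exists_sub_add_inv_one_sub_mul_le {α c ε : ℝ} (hα0 : 0 < α) (hα1 : α < 1) (hε : 0 < ε) :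
    ∃ q z s : ℝ, 0 < z ∧ q ^ 2 + c ^ 2 ≤ 4 * z * s ∧
      z - q + (1 - α)⁻¹ * s ≤ |c| * √(α / (1 - α)) + ε := by
  set K := |c| * √(α / (1 - α))
  have hK0 : 0 ≤ K := by positivity
  set z := (K + ε) / (2 * α) with hz
  have hz0 : 0 < z := by positivity
  set q := 2 * z * (1 - α)
  refine ⟨q, z, (q ^ 2 + c ^ 2) / (4 * z), hz0, by rw [mul_div_cancel₀ _ (by positivity)], ?_⟩
  have h2αz : 2 * α * z = K + ε := by rw [hz]; field_simp
  rw [sub_add_inv_one_sub_mul_eq hα0 hα1 hz0 (sq_abs_mul_sqrt_div_one_sub hα0 hα1), sub_self,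
    zero_pow two_ne_zero, zero_div, add_zero, add_le_add_iff_left, h2αz, add_sub_cancel_left,
    div_le_iff₀ (by positivity)]
  nlinarith

theorem socp_optimal_value
    (α Θ θ0 μ σ : ℝ) (hα : α ∈ Set.Ioo (0 : ℝ) 1) (hσ : 0 < σ) :
    sInf { v : ℝ | ∃ β e q z s : ℝ, 0 ≤ e ∧ 0 < z ∧
        0 < e - θ0 + β + q - Θ * μ - z ∧
        Real.sqrt (q ^ 2 + Θ ^ 2 * σ ^ 2 + (z - s) ^ 2) ≤ z + s ∧
        v = β + (1 - α)⁻¹ * (e + s) } =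
    Θ * μ + θ0 + |Θ| * σ * Real.sqrt (α / (1 - α)) := by
  obtain ⟨hα0, hα1⟩ := hα
  have hcone (q z s : ℝ) (hz : 0 < z) :
      √(q ^ 2 + Θ ^ 2 * σ ^ 2 + (z - s) ^ 2) ≤ z + s ↔ q ^ 2 + (Θ * σ) ^ 2 ≤ 4 * z * s := by
    rw [mul_pow]; exact sqrt_add_sq_sub_le_add_iff (by positivity) hz
  rw [show |Θ| * σ = |Θ * σ| by rw [abs_mul, abs_of_pos hσ]]
  have happrox (ε : ℝ) (hε : 0 < ε) : ∃ β q z s : ℝ, 0 < z ∧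
      0 < 0 - θ0 + β + q - Θ * μ - z ∧ q ^ 2 + (Θ * σ) ^ 2 ≤ 4 * z * s ∧
      β + (1 - α)⁻¹ * (0 + s) < Θ * μ + θ0 + |Θ * σ| * √(α / (1 - α)) + ε := by
    obtain ⟨q, z, s, hz, hqzs, hval⟩ :=
      exists_sub_add_inv_one_sub_mul_le (c := Θ * σ) hα0 hα1 (half_pos hε)
    exact ⟨θ0 + Θ * μ + z - q + ε / 4, q, z, s, hz, by linarith, hqzs, by rw [zero_add]; linarith⟩
  refine csInf_eq_of_forall_ge_of_forall_gt_exists_lt ?_ ?_ fun w hw => ?_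
  · obtain ⟨β, q, z, s, hz, hβ, hqzs, -⟩ := happrox 1 one_pos
    exact ⟨_, β, 0, q, z, s, le_rfl, hz, hβ, (hcone q z s hz).2 hqzs, rfl⟩
  · rintro v ⟨β, e, q, z, s, he, hz, hβ, hqzs, rfl⟩
    have hK := abs_mul_sqrt_div_one_sub_le hα0 hα1 hz ((hcone q z s hz).1 hqzs)
    have he' : e ≤ (1 - α)⁻¹ * e :=
      le_mul_of_one_le_left he (one_le_inv₀ (by linarith) |>.2 (by linarith))
    linarith
  · obtain ⟨β, q, z, s, hz, hβ, hqzs, hval⟩ := happrox _ (sub_pos.2 hw)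
    exact ⟨_, ⟨β, 0, q, z, s, le_rfl, hz, hβ, (hcone q z s hz).2 hqzs, rfl⟩, by linarith⟩
end

section
/- Let P be a Borel probability measure on ℝ with finite second moment, mean m and variance σ². Then for every β ∈ ℝ, ∫ max(x - β, 0) dP(x) ≤ ((m - β) + Real.sqrt ((m - β)² + σ²)) / 2. -/
/-!
Write `max y 0 = (y + |y|) / 2`. The variable `Y x = x - β` has mean `m - β` and variance `σ²`,
and `(E|Y|)² ≤ E[Y²] = (m - β)² + σ²` because `Var |Y| ≥ 0`.
-/

open MeasureTheory ProbabilityTheory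

namespace ProbabilityTheory

variable {Ω : Type*} [MeasurableSpace Ω] {μ : Measure Ω} {X : Ω → ℝ}

lemma integral_max_zero_eq (hX : Integrable X μ) :
    ∫ ω, max (X ω) 0 ∂μ = ((∫ ω, X ω ∂μ) + ∫ ω, |X ω| ∂μ) / 2 := by
  rw [← integral_add hX hX.abs, ← integral_div]
  congr with ω
  rcases le_total (X ω) 0 with h | h <;> simp [h, abs_of_nonpos, abs_of_nonneg]

variable [IsProbabilityMeasure μ]

lemma sq_integral_abs_le_integral_sq (hX : MemLp X 2 μ) :
    (∫ ω, |X ω| ∂μ) ^ 2 ≤ ∫ ω, X ω ^ 2 ∂μ := by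
  have h := variance_eq_sub hX.abs
  simp only [Pi.pow_apply, Pi.abs_apply, sq_abs] at h
  linarith [variance_nonneg |X| μ]

lemma integral_abs_le_sqrt_sq_integral_add_variance (hX : MemLp X 2 μ) :
    ∫ ω, |X ω| ∂μ ≤ √((∫ ω, X ω ∂μ) ^ 2 + Var[X; μ]) := by
  refine Real.le_sqrt_of_sq_le ?_
  have h := variance_eq_sub hX
  simp only [Pi.pow_apply] at h
  linarith [sq_integral_abs_le_integral_sq hX]

theorem integral_max_zero_le (hX : MemLp X 2 μ) :
    ∫ ω, max (X ω) 0 ∂μ ≤ ((∫ ω, X ω ∂μ) + √((∫ ω, X ω ∂μ) ^ 2 + Var[X; μ])) / 2 := by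
  rw [integral_max_zero_eq (hX.integrable one_le_two)]
  gcongr
  exact integral_abs_le_sqrt_sq_integral_add_variance hX

end ProbabilityTheory

theorem expected_positive_part_moment_bound
    (P : Measure ℝ) [IsProbabilityMeasure P] (m σ : ℝ)
    (h2 : MemLp id 2 P) (hmean : (∫ x, x ∂P) = m)
    (hvar : (∫ x, (x - m) ^ 2 ∂P) = σ ^ 2) :
    ∀ β : ℝ, (∫ x, max (x - β) 0 ∂P) ≤
      ((m - β) + Real.sqrt ((m - β) ^ 2 + σ ^ 2)) / 2 := by
  intro β
  have h_mean : ∫ x, (x - β) ∂P = m - β := by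
    rw [integral_sub (f := fun x ↦ x) (h2.integrable one_le_two) (integrable_const β), hmean]
    simp
  have h_var : Var[fun x ↦ x - β; P] = σ ^ 2 := by
    rw [variance_sub_const (X := fun x ↦ x) aestronglyMeasurable_id,
      variance_eq_integral (X := fun x ↦ x) aemeasurable_id]
    simpa [hmean] using hvar
  simpa [h_mean, h_var] using
    integral_max_zero_le (X := fun x ↦ x - β) (h2.sub (memLp_const β))
end

section
/- Let m, β ∈ ℝ and σ > 0. Set c = Real.sqrt ((m - β)² + σ²) and p = (1 + (m - β)/c)/2. Then the two-point measure P = p·δ_{β+c} + (1-p)·δ_{β-c} (where δ_y denotes the Dirac measure at y) is a Borel probability measure on ℝ with mean m, variance σ², and ∫ max(x - β, 0) dP(x) = ((m - β) + Real.sqrt ((m - β)² + σ²)) / 2. -/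
/-!
The weight `p` is chosen so that `p * c = (c + (m - β)) / 2`. Each of the three integrals is
`p` times a value at `β + c` plus `1 - p` times a value at `β - c`, and becomes linear in `p * c`
once `c ^ 2 = (m - β) ^ 2 + σ ^ 2` is used; the positive part vanishes at `β - c`.
-/

open MeasureTheory

section TwoPointMeasure

variable {α : Type*} [MeasurableSpace α]

theorem integral_smul_dirac_add_smul_dirac [MeasurableSingletonClass α]
    {E : Type*} [NormedAddCommGroup E] [NormedSpace ℝ E] [CompleteSpace E]
    {a b : ℝ} (ha : 0 ≤ a) (hb : 0 ≤ b) (x y : α) (f : α → E) :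
    ∫ z, f z ∂(ENNReal.ofReal a • Measure.dirac x + ENNReal.ofReal b • Measure.dirac y)
      = a • f x + b • f y := by
  rw [integral_add_measure
      ((integrable_dirac enorm_lt_top).smul_measure ENNReal.ofReal_ne_top)
      ((integrable_dirac enorm_lt_top).smul_measure ENNReal.ofReal_ne_top),
    integral_smul_measure, integral_smul_measure, integral_dirac, integral_dirac,
    ENNReal.toReal_ofReal ha, ENNReal.toReal_ofReal hb]

theorem isProbabilityMeasure_smul_dirac_add_smul_dirac {p : ℝ} (hp₀ : 0 ≤ p) (hp₁ : p ≤ 1)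
    (x y : α) :
    IsProbabilityMeasure
      (ENNReal.ofReal p • Measure.dirac x + ENNReal.ofReal (1 - p) • Measure.dirac y) := by
  constructor
  simp only [Measure.add_apply, Measure.smul_apply, measure_univ, smul_eq_mul, mul_one]
  rw [← ENNReal.ofReal_add hp₀ (sub_nonneg.mpr hp₁), add_sub_cancel, ENNReal.ofReal_one]

end TwoPointMeasure

section Weight

variable {c d : ℝ}

theorem abs_div_le_one_of_abs_le (h : |d| ≤ c) : |d / c| ≤ 1 := by
  rw [abs_div]
  exact div_le_one_of_le₀ (h.trans (le_abs_self c)) (abs_nonneg c)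

theorem one_add_div_div_two_mem_Icc (h : |d| ≤ c) : (1 + d / c) / 2 ∈ Set.Icc 0 1 := by
  have := abs_le.mp (abs_div_le_one_of_abs_le h)
  constructor <;> linarith [this.1, this.2]

-- Also for `c = 0`, where `d / c = 0` and `|d| ≤ c` forces `d = 0`.
theorem one_add_div_div_two_mul (h : |d| ≤ c) : (1 + d / c) / 2 * c = (c + d) / 2 := by
  rcases eq_or_ne c 0 with rfl | hc
  · simp [abs_nonpos_iff.mp h]
  · field_simp

end Weight

theorem two_point_measure_attains_positive_part_bound_general
    (m β σ : ℝ) (c p : ℝ)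
    (hc : c = Real.sqrt ((m - β) ^ 2 + σ ^ 2))
    (hp : p = (1 + (m - β) / c) / 2)
    (P : Measure ℝ)
    (hP : P = ENNReal.ofReal p • Measure.dirac (β + c) +
              ENNReal.ofReal (1 - p) • Measure.dirac (β - c)) :
    IsProbabilityMeasure P ∧
    (∫ x, x ∂P) = m ∧
    (∫ x, (x - m) ^ 2 ∂P) = σ ^ 2 ∧
    (∫ x, max (x - β) 0 ∂P) = ((m - β) + Real.sqrt ((m - β) ^ 2 + σ ^ 2)) / 2 := by
  have hc_sq : c ^ 2 = (m - β) ^ 2 + σ ^ 2 := by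
    rw [hc, Real.sq_sqrt (by positivity)]
  have habs : |m - β| ≤ c := hc ▸ Real.abs_le_sqrt (le_add_of_nonneg_right (sq_nonneg σ))
  obtain ⟨hp₀, hp₁⟩ : p ∈ Set.Icc 0 1 := hp ▸ one_add_div_div_two_mem_Icc habs
  have hpc : p * c = (c + (m - β)) / 2 := hp ▸ one_add_div_div_two_mul habs
  have hc₀ : 0 ≤ c := (abs_nonneg _).trans habs
  have hI (f : ℝ → ℝ) : ∫ x, f x ∂P = p * f (β + c) + (1 - p) * f (β - c) :=
    hP ▸ integral_smul_dirac_add_smul_dirac hp₀ (sub_nonneg.mpr hp₁) _ _ f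
  refine ⟨hP ▸ isProbabilityMeasure_smul_dirac_add_smul_dirac hp₀ hp₁ _ _, ?_, ?_, ?_⟩
  · rw [hI fun x ↦ x]
    linear_combination 2 * hpc
  · rw [hI (fun x ↦ (x - m) ^ 2)]
    linear_combination hc_sq - 4 * (m - β) * hpc
  · rw [hI (fun x ↦ max (x - β) 0), add_sub_cancel_left, sub_sub_cancel_left,
      max_eq_left hc₀, max_eq_right (neg_nonpos.mpr hc₀), ← hc]
    linear_combination hpc

theorem two_point_measure_attains_positive_part_bound
    (m β σ : ℝ) (hσ : 0 < σ) (c p : ℝ)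
    (hc : c = Real.sqrt ((m - β) ^ 2 + σ ^ 2))
    (hp : p = (1 + (m - β) / c) / 2)
    (P : Measure ℝ)
    (hP : P = ENNReal.ofReal p • Measure.dirac (β + c) +
              ENNReal.ofReal (1 - p) • Measure.dirac (β - c)) :
    IsProbabilityMeasure P ∧
    (∫ x, x ∂P) = m ∧
    (∫ x, (x - m) ^ 2 ∂P) = σ ^ 2 ∧
    (∫ x, max (x - β) 0 ∂P) = ((m - β) + Real.sqrt ((m - β) ^ 2 + σ ^ 2)) / 2 :=
  two_point_measure_attains_positive_part_bound_general m β σ c p hc hp P hP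
end

section
/- Let α ∈ (0,1), m ∈ ℝ and σ > 0. Then for every β ∈ ℝ, β + (2(1-α))⁻¹ · ((m - β) + Real.sqrt ((m - β)² + σ²)) ≥ m + σ·Real.sqrt (α/(1-α)), and equality holds at β = m + (2α - 1)·σ/(2·Real.sqrt (α·(1-α))). -/
/-!
Writing `t = m - β` and `s = √(α(1-α))`, the unit vector `(1 - 2α, 2s)` and Cauchy–Schwarz give
`(1 - 2α) t + 2sσ ≤ √(t² + σ²)`, i.e. `t + √(t² + σ²) ≥ 2(1-α) t + 2sσ`. Dividing by `2(1-α)` and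
adding `β` bounds the objective below by `m + σ s / (1-α) = m + σ √(α/(1-α))`. Cauchy–Schwarz is
tight when `(t, σ)` is parallel to `(1 - 2α, 2s)`, which is the choice of `β₀`.
-/

namespace Real

lemma mul_add_mul_le_sqrt_sq_add_sq {u v : ℝ} (huv : u ^ 2 + v ^ 2 = 1) (x y : ℝ) :
    u * x + v * y ≤ √(x ^ 2 + y ^ 2) :=
  (le_abs_self _).trans <| abs_le_sqrt <| by nlinarith [sq_nonneg (u * y - v * x)]

lemma sqrt_sq_div_add_sq {u v : ℝ} (huv : u ^ 2 + v ^ 2 = 1) (hv : 0 < v) {y : ℝ}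
    (hy : 0 ≤ y) : √((u * y / v) ^ 2 + y ^ 2) = y / v := by
  rw [show (u * y / v) ^ 2 + y ^ 2 = (y / v) ^ 2 by field_simp; linear_combination y ^ 2 * huv,
    sqrt_sq (by positivity)]

lemma sqrt_div_eq_sqrt_mul_div {x y : ℝ} (hy : 0 < y) : √(x / y) = √(x * y) / y := by
  rw [show x / y = x * y / y ^ 2 by field_simp, sqrt_div' _ (sq_nonneg y), sqrt_sq hy.le]

end Real

lemma one_sub_two_mul_sq_add_two_mul_sqrt_sq {α : ℝ} (h0 : 0 ≤ α) (h1 : α ≤ 1) :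
    (1 - 2 * α) ^ 2 + (2 * √(α * (1 - α))) ^ 2 = 1 := by
  rw [mul_pow, Real.sq_sqrt (by nlinarith)]
  ring

theorem rockafellar_uryasev_scalar_minimization
    (α m σ : ℝ) (hα : α ∈ Set.Ioo (0 : ℝ) 1) (hσ : 0 < σ) :
    (∀ β : ℝ, m + σ * Real.sqrt (α / (1 - α)) ≤
        β + (2 * (1 - α))⁻¹ * ((m - β) + Real.sqrt ((m - β) ^ 2 + σ ^ 2))) ∧
    (let β₀ : ℝ := m + (2 * α - 1) * σ / (2 * Real.sqrt (α * (1 - α)));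
      β₀ + (2 * (1 - α))⁻¹ * ((m - β₀) + Real.sqrt ((m - β₀) ^ 2 + σ ^ 2)) =
        m + σ * Real.sqrt (α / (1 - α))) := by
  obtain ⟨hα0, hα1⟩ := hα
  have h1α : 0 < 1 - α := by linarith
  have hunit := one_sub_two_mul_sq_add_two_mul_sqrt_sq hα0.le hα1.le
  have hvalue : m + σ * Real.sqrt (α / (1 - α)) =
      m + (2 * (1 - α))⁻¹ * (2 * Real.sqrt (α * (1 - α)) * σ) := by
    rw [Real.sqrt_div_eq_sqrt_mul_div h1α]
    field_simp
  set s := Real.sqrt (α * (1 - α))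
  have hs : 0 < s := Real.sqrt_pos.mpr (by positivity)
  rw [hvalue]
  constructor
  · intro β
    have hcs := Real.mul_add_mul_le_sqrt_sq_add_sq hunit (m - β) σ
    calc m + (2 * (1 - α))⁻¹ * (2 * s * σ)
        = β + (2 * (1 - α))⁻¹ * (2 * (1 - α) * (m - β) + 2 * s * σ) := by field_simp; ring
      _ ≤ β + (2 * (1 - α))⁻¹ * ((m - β) + Real.sqrt ((m - β) ^ 2 + σ ^ 2)) := by
        gcongr β + _ * ?_
        linarith
  · intro β₀
    have hβ₀ : β₀ = m - (1 - 2 * α) * σ / (2 * s) := by ring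
    rw [hβ₀, sub_sub_cancel, Real.sqrt_sq_div_add_sq hunit (by positivity) hσ.le]
    field_simp
    linear_combination -σ * hunit
end

section
/- Let α ∈ (0,1) and let P be a Borel probability measure on ℝ with finite first moment. If there exists β ∈ ℝ such that β + (1-α)⁻¹ · ∫ max(x - β, 0) dP(x) ≤ 0, then P {x : x ≤ 0} ≥ α. -/
open MeasureTheory Set

/-
On `{x > 0}` the integrand `max (x - β) 0` exceeds `-β`, so Markov's inequality bounds
`(-β) · P(X > 0)` by the integral, which the hypothesis bounds by `(-β)(1 - α)`. The hypothesis
forces `β ≤ 0`; for `β < 0` this gives `P(X > 0) ≤ 1 - α`, while for `β = 0` the integral of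
`max x 0` vanishes, so `X ≤ 0` almost surely.
-/

variable {μ : Measure ℝ}

lemma integrable_max_sub_const_zero [IsFiniteMeasure μ] (hμ : Integrable id μ) (β : ℝ) :
    Integrable (fun x ↦ max (x - β) 0) μ :=
  (hμ.sub (integrable_const β)).pos_part

lemma neg_mul_measureReal_Ioi_le_integral_max_sub [IsFiniteMeasure μ] (hμ : Integrable id μ)
    (β : ℝ) : -β * μ.real (Ioi 0) ≤ ∫ x, max (x - β) 0 ∂μ := by
  have hind : (Ioi (0 : ℝ)).indicator (fun _ ↦ -β) ≤ fun x ↦ max (x - β) 0 := by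
    intro x
    by_cases hx : 0 < x
    · simp only [indicator_of_mem (show x ∈ Ioi 0 from hx)]
      exact le_max_of_le_left (by linarith)
    · simp only [indicator_of_notMem (show x ∉ Ioi 0 from hx), le_max_right]
  calc -β * μ.real (Ioi 0) = ∫ x, (Ioi (0 : ℝ)).indicator (fun _ ↦ -β) x ∂μ := by
        rw [integral_indicator_const _ measurableSet_Ioi, smul_eq_mul, mul_comm]
    _ ≤ ∫ x, max (x - β) 0 ∂μ :=
        integral_mono ((integrable_const _).indicator measurableSet_Ioi)
          (integrable_max_sub_const_zero hμ β) hind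

lemma measure_Ioi_eq_zero_of_integral_max_nonpos [IsFiniteMeasure μ] (hμ : Integrable id μ)
    (h : ∫ x, max x 0 ∂μ ≤ 0) : μ (Ioi 0) = 0 := by
  have hzero : ∀ᵐ x ∂μ, max x 0 = 0 :=
    (integral_eq_zero_iff_of_nonneg (fun _ ↦ le_max_right _ _)
      (by simpa using integrable_max_sub_const_zero hμ 0)).mp
      (le_antisymm h (integral_nonneg fun _ ↦ le_max_right _ _))
  rw [← compl_mem_ae_iff]
  filter_upwards [hzero] with x hx
  simpa using hx

lemma measureReal_Ioi_le_of_cvar_nonpos [IsFiniteMeasure μ] (hμ : Integrable id μ) {α β : ℝ}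
    (hα : α < 1) (h : β + (1 - α)⁻¹ * (∫ x, max (x - β) 0 ∂μ) ≤ 0) :
    μ.real (Ioi 0) ≤ 1 - α := by
  have h1α : 0 < 1 - α := by linarith
  have hI : ∫ x, max (x - β) 0 ∂μ ≤ -β * (1 - α) := by
    have := mul_le_mul_of_nonneg_left h h1α.le
    rw [mul_add, ← mul_assoc, mul_inv_cancel₀ h1α.ne', one_mul, mul_zero] at this
    linarith
  have hI_nonneg : 0 ≤ ∫ x, max (x - β) 0 ∂μ := integral_nonneg fun _ ↦ le_max_right _ _
  rcases (show β ≤ 0 by nlinarith).lt_or_eq with hβ | rfl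
  · have := (neg_mul_measureReal_Ioi_le_integral_max_sub hμ β).trans hI
    exact le_of_mul_le_mul_left this (neg_pos.mpr hβ)
  · rw [measureReal_def, measure_Ioi_eq_zero_of_integral_max_nonpos hμ (by simpa using hI)]
    simpa using h1α.le

theorem cvar_nonpos_implies_chance_constraint
    (α : ℝ) (hα : α ∈ Set.Ioo (0 : ℝ) 1)
    (P : Measure ℝ) [IsProbabilityMeasure P] (h1 : MemLp id 1 P)
    (h : ∃ β : ℝ, β + (1 - α)⁻¹ * (∫ x, max (x - β) 0 ∂P) ≤ 0) :
    ENNReal.ofReal α ≤ P {x : ℝ | x ≤ 0} := by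
  obtain ⟨β, hβ⟩ := h
  have htail := measureReal_Ioi_le_of_cvar_nonpos (memLp_one_iff_integrable.mp h1) hα.2 hβ
  have hmass : P.real (Iic 0) = 1 - P.real (Ioi 0) := by
    rw [← compl_Iic, probReal_compl_eq_one_sub measurableSet_Iic, sub_sub_cancel]
  calc ENNReal.ofReal α ≤ ENNReal.ofReal (P.real (Iic 0)) :=
        ENNReal.ofReal_le_ofReal (by linarith)
    _ = P {x : ℝ | x ≤ 0} := ofReal_measureReal
end

section
/- Let α ∈ (0,1), Θ, θ⁰, μ ∈ ℝ and σ > 0. Then every Borel probability measure P on ℝ with finite second moment, mean μ and variance σ² satisfies P {x : Θx + θ⁰ ≤ 0} ≥ α, if and only if Θμ + θ⁰ + |Θ|·σ·Real.sqrt (α/(1-α)) ≤ 0. -/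
/-!
Write `Y = Θ x + θ0`; under any admissible `P` it has mean `m = Θ μ + θ0` and standard
deviation `s = |Θ| σ`. If `m < 0`, Cantelli's inequality gives `P (Y > 0) ≤ s² / (s² + m²)`,
and `m + s √(α / (1 - α)) ≤ 0` says precisely that this is at most `1 - α`; if `m = 0` the
condition forces `s = 0`.

Conversely, for `t ≠ 0` the law with mass `1 / (1 + t²)` at `μ + σ t` and `t² / (1 + t²)`
at `μ - σ / t` has mean `μ` and variance `σ²`. If the closed form fails, there is such a `t`
with `t² < α / (1 - α)` whose first atom lies in `{Y > 0}`, so this law gives `{Y ≤ 0}` mass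
less than `α`.
-/

open MeasureTheory ProbabilityTheory Filter Topology

noncomputable def twoPointMeasure (p x y : ℝ) : Measure ℝ :=
  ENNReal.ofReal p • Measure.dirac x + ENNReal.ofReal (1 - p) • Measure.dirac y

section TwoPoint

variable {p : ℝ} (x y : ℝ)

lemma isProbabilityMeasure_twoPointMeasure (hp₀ : 0 ≤ p) (hp₁ : p ≤ 1) :
    IsProbabilityMeasure (twoPointMeasure p x y) := by
  constructor
  simp [twoPointMeasure, ← ENNReal.ofReal_add hp₀ (sub_nonneg.2 hp₁)]

lemma integral_twoPointMeasure (hp₀ : 0 ≤ p) (hp₁ : p ≤ 1) (f : ℝ → ℝ) :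
    ∫ z, f z ∂twoPointMeasure p x y = p * f x + (1 - p) * f y := by
  rw [twoPointMeasure, integral_add_measure, integral_smul_measure, integral_smul_measure,
    integral_dirac, integral_dirac, ENNReal.toReal_ofReal hp₀,
    ENNReal.toReal_ofReal (sub_nonneg.2 hp₁), smul_eq_mul, smul_eq_mul]
  all_goals exact (integrable_dirac enorm_lt_top).smul_measure ENNReal.ofReal_ne_top

lemma memLp_id_twoPointMeasure (hp₀ : 0 ≤ p) (hp₁ : p ≤ 1) :
    MemLp id 2 (twoPointMeasure p x y) := by
  have := isProbabilityMeasure_twoPointMeasure x y hp₀ hp₁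
  refine MemLp.of_bound measurable_id.aestronglyMeasurable (max ‖x‖ ‖y‖) ?_
  rw [twoPointMeasure, ae_add_measure_iff]
  constructor <;> refine Measure.ae_smul_measure ?_ _ <;> rw [ae_dirac_eq] <;>
    exact eventually_pure.2 (by simp)

lemma twoPointMeasure_le_of_notMem {S : Set ℝ} (hx : x ∉ S) :
    twoPointMeasure p x y S ≤ ENNReal.ofReal (1 - p) := by
  simp only [twoPointMeasure, Measure.add_apply, Measure.smul_apply, smul_eq_mul,
    Measure.dirac_apply, Set.indicator_of_notMem hx, mul_zero, zero_add]
  exact mul_le_of_le_one_right' (Set.indicator_le_self S 1 y)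

end TwoPoint

lemma exists_mean_variance_measure_le (μ σ : ℝ) {t : ℝ} (ht : t ≠ 0) {S : Set ℝ}
    (hS : μ + σ * t ∉ S) :
    ∃ P : Measure ℝ, IsProbabilityMeasure P ∧ MemLp id 2 P ∧ ∫ x, x ∂P = μ ∧
      ∫ x, (x - μ) ^ 2 ∂P = σ ^ 2 ∧ P S ≤ ENNReal.ofReal (t ^ 2 / (1 + t ^ 2)) := by
  have hp₀ : 0 ≤ (1 + t ^ 2)⁻¹ := by positivity
  have hp₁ : (1 + t ^ 2)⁻¹ ≤ 1 := inv_le_one_of_one_le₀ (by nlinarith)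
  refine ⟨twoPointMeasure (1 + t ^ 2)⁻¹ (μ + σ * t) (μ - σ / t),
    isProbabilityMeasure_twoPointMeasure _ _ hp₀ hp₁, memLp_id_twoPointMeasure _ _ hp₀ hp₁,
    ?_, ?_, ?_⟩
  · rw [integral_twoPointMeasure _ _ hp₀ hp₁]
    field_simp
    ring
  · rw [integral_twoPointMeasure _ _ hp₀ hp₁]
    field_simp
    ring
  · convert twoPointMeasure_le_of_notMem _ _ hS using 2
    field_simp
    ring

lemma sq_div_one_add_sq_lt {α u : ℝ} (hα : α < 1) (hu : 0 ≤ u) (h : u < √(α / (1 - α))) :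
    u ^ 2 / (1 + u ^ 2) < α := by
  have h := (Real.lt_sqrt hu).1 h
  rw [lt_div_iff₀ (by linarith)] at h
  rw [div_lt_iff₀ (by positivity)]
  linarith

lemma exists_pos_lt_and_pos_add_mul {m s c : ℝ} (hc : 0 < c) (h : 0 < m + s * c) :
    ∃ u, 0 < u ∧ u < c ∧ 0 < m + s * u := by
  have hpos : ∀ᶠ u in 𝓝[<] c, 0 < m + s * u :=
    nhdsWithin_le_nhds <| (continuous_const.add (continuous_const.mul continuous_id)).tendsto c
      |>.eventually (lt_mem_nhds h)
  have hIoo : ∀ᶠ u in 𝓝[<] c, u ∈ Set.Ioo 0 c := Ioo_mem_nhdsLT hc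
  obtain ⟨u, ⟨hu₀, huc⟩, hu⟩ := (hIoo.and hpos).exists
  exact ⟨u, hu₀, huc, hu⟩

lemma exists_sq_div_lt_and_pos {α Θ θ0 μ σ : ℝ} (hα : α ∈ Set.Ioo 0 1)
    (h : 0 < Θ * μ + θ0 + |Θ| * σ * √(α / (1 - α))) :
    ∃ t ≠ 0, t ^ 2 / (1 + t ^ 2) < α ∧ 0 < Θ * (μ + σ * t) + θ0 := by
  obtain ⟨u, hu₀, huc, hu⟩ :=
    exists_pos_lt_and_pos_add_mul (Real.sqrt_pos.2 (div_pos hα.1 (by linarith [hα.2]))) h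
  have huα := sq_div_one_add_sq_lt hα.2 hu₀.le huc
  rcases lt_or_ge Θ 0 with hΘ | hΘ
  · refine ⟨-u, neg_ne_zero.2 hu₀.ne', by rwa [neg_sq], ?_⟩
    rw [abs_of_neg hΘ] at hu
    linarith
  · refine ⟨u, hu₀.ne', huα, ?_⟩
    rw [abs_of_nonneg hΘ] at hu
    linarith

lemma measureReal_ge_le_variance_div_add_sq {Ω : Type*} [MeasurableSpace Ω] {P : Measure Ω}
    [IsProbabilityMeasure P] {X : Ω → ℝ} (hX : MemLp X 2 P) {a : ℝ} (ha : 0 < a) :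
    P.real {ω | P[X] + a ≤ X ω} ≤ Var[X; P] / (Var[X; P] + a ^ 2) := by
  set v := Var[X; P]
  set u := v / a
  have hu : 0 ≤ u := div_nonneg (variance_nonneg _ _) ha.le
  -- Markov's inequality for `(X - 𝔼[X] + u) ^ 2`, with the optimal shift `u = Var[X] / a`.
  have hY : MemLp (fun ω ↦ X ω - P[X] + u) 2 P := (hX.sub (memLp_const _)).add (memLp_const _)
  have hY_sq : ∫ ω, (X ω - P[X] + u) ^ 2 ∂P = v + u ^ 2 := by
    have hX₁ := hX.integrable one_le_two
    have hmean : P[fun ω ↦ X ω - P[X] + u] = u := by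
      rw [integral_add (by fun_prop) (by fun_prop), integral_sub hX₁ (by fun_prop)]
      simp
    have hvar : Var[fun ω ↦ X ω - P[X] + u; P] = v := by
      rw [variance_add_const (X := fun ω ↦ X ω - P[X]) (hX.1.sub aestronglyMeasurable_const),
        variance_sub_const hX.1]
    have := variance_eq_sub hY
    rw [hvar, hmean] at this
    simp only [Pi.pow_apply] at this
    linarith
  have markov := mul_meas_ge_le_integral_of_nonneg (.of_forall fun ω ↦ sq_nonneg _)
    hY.integrable_sq ((a + u) ^ 2)
  have hsub : {ω | P[X] + a ≤ X ω} ⊆ {ω | (a + u) ^ 2 ≤ (X ω - P[X] + u) ^ 2} :=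
    fun ω (hω : P[X] + a ≤ X ω) ↦ pow_le_pow_left₀ (add_nonneg ha.le hu) (by linarith) 2
  calc P.real {ω | P[X] + a ≤ X ω} ≤ P.real {ω | (a + u) ^ 2 ≤ (X ω - P[X] + u) ^ 2} :=
        measureReal_mono hsub
    _ ≤ (v + u ^ 2) / (a + u) ^ 2 := by
        rw [le_div_iff₀ (by positivity), mul_comm, ← hY_sq]; exact markov
    _ = v / (v + a ^ 2) := by
        have hva : v + a ^ 2 ≠ 0 :=
          (add_pos_of_nonneg_of_pos (variance_nonneg _ _) (by positivity)).ne'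
        rw [div_eq_div_iff (by positivity) hva]
        simp only [u]
        field_simp
        ring

lemma le_measureReal_nonpos_of_add_sqrt_variance_mul_le {Ω : Type*} [MeasurableSpace Ω]
    {P : Measure Ω} [IsProbabilityMeasure P] {X : Ω → ℝ} (hX : MemLp X 2 P) {α : ℝ}
    (hα : α ∈ Set.Ioo 0 1) (h : P[X] + √(Var[X; P]) * √(α / (1 - α)) ≤ 0) :
    α ≤ P.real {ω | X ω ≤ 0} := by
  obtain ⟨hα₀, hα₁⟩ := hα
  set m := P[X]
  set v := Var[X; P]
  have hv₀ : 0 ≤ v := variance_nonneg X P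
  have hc : 0 < √(α / (1 - α)) := Real.sqrt_pos.2 (div_pos hα₀ (by linarith))
  have hm : m ≤ 0 := by nlinarith [Real.sqrt_nonneg v]
  have hpos : P.real {ω | 0 < X ω} ≤ 1 - α := by
    rcases hm.lt_or_eq with hm | hm
    · have hvc : v * (α / (1 - α)) ≤ (-m) ^ 2 := by
        rw [← Real.sq_sqrt hv₀, ← Real.sq_sqrt (div_pos hα₀ (by linarith)).le, ← mul_pow]
        exact pow_le_pow_left₀ (by positivity) (by linarith) 2
      calc P.real {ω | 0 < X ω} ≤ P.real {ω | m + -m ≤ X ω} :=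
            measureReal_mono fun ω (hω : 0 < X ω) ↦ by simpa using hω.le
        _ ≤ v / (v + (-m) ^ 2) := measureReal_ge_le_variance_div_add_sq hX (neg_pos.2 hm)
        _ ≤ 1 - α := by
          rw [div_le_iff₀ (add_pos_of_nonneg_of_pos hv₀ (pow_pos (neg_pos.2 hm) 2))]
          rw [mul_div_assoc', div_le_iff₀ (by linarith)] at hvc
          nlinarith
    · have hv : v = 0 :=
        (Real.sqrt_eq_zero hv₀).1 (le_antisymm (by nlinarith) (Real.sqrt_nonneg v))
      have hX_eq : ∀ᵐ ω ∂P, X ω = m := ae_eq_integral_of_variance_eq_zero hX hv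
      have : P {ω | 0 < X ω} = 0 :=
        measure_mono_null (fun ω (hω : 0 < X ω) ↦ show X ω ≠ m from hm ▸ hω.ne')
          (ae_iff.1 hX_eq)
      rw [measureReal_def, this, ENNReal.toReal_zero]
      linarith
  have hcompl := probReal_compl_eq_one_sub₀ (μ := P)
    (nullMeasurableSet_le hX.aemeasurable aemeasurable_const (g := fun _ ↦ (0 : ℝ)))
  simp only [Set.compl_ofPred, not_le] at hcompl
  linarith

theorem drcc_closed_form_equivalence
    (α Θ θ0 μ σ : ℝ) (hα : α ∈ Set.Ioo (0 : ℝ) 1) (hσ : 0 < σ) :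
    (∀ P : Measure ℝ, IsProbabilityMeasure P →
        MemLp id 2 P → (∫ x, x ∂P) = μ → (∫ x, (x - μ) ^ 2 ∂P) = σ ^ 2 →
        ENNReal.ofReal α ≤ P {x : ℝ | Θ * x + θ0 ≤ 0}) ↔
    Θ * μ + θ0 + |Θ| * σ * Real.sqrt (α / (1 - α)) ≤ 0 := by
  constructor
  · intro H
    by_contra! h
    obtain ⟨t, ht, htα, hpos⟩ := exists_sq_div_lt_and_pos hα h
    obtain ⟨P, hP, hL2, hmean, hvar, hPS⟩ :=
      exists_mean_variance_measure_le μ σ ht (S := {x | Θ * x + θ0 ≤ 0}) hpos.not_ge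
    exact ((H P hP hL2 hmean hvar).trans hPS).not_gt ((ENNReal.ofReal_lt_ofReal_iff hα.1).2 htα)
  · intro h P _ hL2 hmean hvar
    have hY : MemLp (fun x ↦ Θ * x + θ0) 2 P := (hL2.const_mul Θ).add (memLp_const θ0)
    have hmeanY : ∫ x, Θ * x + θ0 ∂P = Θ * μ + θ0 := by
      have hint : Integrable (fun x : ℝ ↦ x) P := hL2.integrable one_le_two
      rw [integral_add (hint.const_mul Θ) (integrable_const θ0), integral_const_mul, hmean]
      simp
    have hsdY : √(Var[fun x ↦ Θ * x + θ0; P]) = |Θ| * σ := by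
      rw [variance_add_const (by fun_prop), variance_const_mul,
        variance_eq_integral aemeasurable_id', hmean, hvar, Real.sqrt_mul (sq_nonneg Θ),
        Real.sqrt_sq_eq_abs, Real.sqrt_sq hσ.le]
    rw [← ofReal_measureReal]
    exact ENNReal.ofReal_le_ofReal
      (le_measureReal_nonpos_of_add_sqrt_variance_mul_le hY hα (by rwa [hmeanY, hsdY]))
end

section
/- Let α ∈ (0,1), Θ, θ⁰, μ ∈ ℝ and σ > 0. If (β, e, q, z, s) ∈ ℝ⁵ satisfies e ≥ 0, z > 0, e - θ⁰ + β + q - Θμ - z > 0, and Real.sqrt (q² + Θ²σ² + (z - s)²) ≤ z + s, then β + (1-α)⁻¹·(e + s) ≥ Θμ + θ⁰ + |Θ|·σ·Real.sqrt (α/(1-α)). -/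
/-!
The cone constraint says `q² + Θ²σ² ≤ 4 z s`, and the linear constraint bounds `β` below by
`θ⁰ + Θμ + z - q - e`. After multiplying the goal by `1 - α`, what remains is
`(1 - α) (z - q) + s ≥ √(α (1 - α)) |Θ| σ`: minimising `(1 - α) (z - q) + q² / 4z` over `q`
(at `q = 2 (1 - α) z`) leaves `α (1 - α) z + Θ²σ² / 4z`, which is at least `√(α (1 - α)) |Θ| σ`
by AM–GM.
-/

theorem le_four_mul_of_sqrt_add_sq_sub_le {a z s : ℝ} (h : √(a + (z - s) ^ 2) ≤ z + s) :
    a ≤ 4 * z * s := by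
  nlinarith [(Real.sqrt_le_iff.mp h).2]

theorem sqrt_mul_one_sub_mul_abs_le {a z q s t : ℝ} (ha₀ : 0 ≤ a) (ha₁ : a ≤ 1) (hz : 0 < z)
    (h : q ^ 2 + t ^ 2 ≤ 4 * z * s) :
    √(a * (1 - a)) * |t| ≤ a * (z - q) + s := by
  set r := √(a * (1 - a))
  have hr : r ^ 2 = a * (1 - a) := Real.sq_sqrt (mul_nonneg ha₀ (by linarith))
  suffices 4 * z * (r * |t|) ≤ 4 * z * (a * (z - q) + s) by
    exact le_of_mul_le_mul_left this (by positivity)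
  calc 4 * z * (r * |t|) ≤ 4 * a * (1 - a) * z ^ 2 + t ^ 2 := by
        nlinarith [sq_nonneg (2 * z * r - |t|), sq_abs t]
    _ ≤ (q - 2 * a * z) ^ 2 + 4 * a * (1 - a) * z ^ 2 + t ^ 2 := by
        linarith [sq_nonneg (q - 2 * a * z)]
    _ ≤ 4 * z * (a * (z - q) + s) := by linarith

theorem one_sub_mul_sqrt_div_one_sub {α : ℝ} (hα : α < 1) :
    (1 - α) * √(α / (1 - α)) = √((1 - α) * α) := by
  have h : 0 < 1 - α := by linarith
  rw [show (1 - α) * α = (1 - α) ^ 2 * (α / (1 - α)) by field_simp,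
    Real.sqrt_mul (sq_nonneg _), Real.sqrt_sq h.le]

theorem socp_weak_duality
    (α Θ θ0 μ σ : ℝ) (hα : α ∈ Set.Ioo (0 : ℝ) 1) (hσ : 0 < σ)
    (β e q z s : ℝ) (he : 0 ≤ e) (hz : 0 < z)
    (hcone : 0 < e - θ0 + β + q - Θ * μ - z)
    (hsoc : Real.sqrt (q ^ 2 + Θ ^ 2 * σ ^ 2 + (z - s) ^ 2) ≤ z + s) :
    Θ * μ + θ0 + |Θ| * σ * Real.sqrt (α / (1 - α)) ≤
      β + (1 - α)⁻¹ * (e + s) := by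
  obtain ⟨hα₀, hα₁⟩ := hα
  have hsoc' : q ^ 2 + (Θ * σ) ^ 2 ≤ 4 * z * s := by
    rw [mul_pow]; exact le_four_mul_of_sqrt_add_sq_sub_le hsoc
  have hamgm := sqrt_mul_one_sub_mul_abs_le (a := 1 - α) (by linarith) (by linarith) hz hsoc'
  rw [sub_sub_cancel, abs_mul, abs_of_pos hσ, ← one_sub_mul_sqrt_div_one_sub hα₁] at hamgm
  rw [← sub_le_iff_le_add', le_inv_mul_iff₀ (by linarith)]
  linarith [mul_pos (sub_pos.mpr hα₁) hcone, mul_nonneg hα₀.le he]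
end
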